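/- Assume L(ε) stabilizes at k ≥ 0. Then for every l ≥ 2 and every 1 ≤ i ≤ k+1: E_{i,k+1+l} = e_{i,k+2}∘S̄_{k+1+l}; i.e., the first k+1 components of the columns E_{k+2}, E_{k+3}, … differ only by composition on the right with S̄_{k+2}, S̄_{k+3}, …. -/

import Mathlib

/-!
For `x ∈ N m` the canonical chain `j ↦ M (m - j) m x` is a Jordan chain of length `m`: its Jordan
equations `jordanSum` follow the recursion of `M` and, at the top, equal `S m` because
`∑ v ≤ m, Sb v ∘ E v m = S m`. Conversely, the root of a Jordan chain `b` of length `n` lies in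
`N n`: subtracting the canonical chain of `b 0` leaves a chain starting at `0`, whose shift is one
step shorter, and by induction the next Jordan equation forces `Sb (n + 1) (b 0) ∈ R 1 + ⋯ + R n`,
i.e. `S (n + 1) (b 0) = 0`.

If `L` stabilizes at `k`, a root with a chain of length `k + 1` has chains of every length, so
`N (j + 1) = N j` for `j ≥ k + 1`. Hence `Nc v = 0` and `T v = S v⁻¹ ∘ P v = 0` for `v ≥ k + 2`,
so `E v m = 0` for `k + 2 ≤ v < m`, and the first `k + 1` entries of the column `E · m` and of
`e · (k + 2) ∘ Sb m` solve the same triangular system.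
-/

open Finset

theorem sum_range_add_one_eq_sum_Icc {X : Type*} [AddCommMonoid X] (n : ℕ) (f : ℕ → X) :
    ∑ i ∈ range n, f (i + 1) = ∑ i ∈ Icc 1 n, f i := by
  rw [range_eq_Ico, sum_Ico_add' f, ← Ico_add_one_right_eq_Icc, zero_add]

theorem sum_Icc_one_succ {X : Type*} [AddCommMonoid X] (n : ℕ) (f : ℕ → X) :
    ∑ i ∈ Icc 1 (n + 1), f i = f 1 + ∑ i ∈ Icc 1 n, f (i + 1) := by
  rw [← sum_range_add_one_eq_sum_Icc, sum_range_succ', ← sum_range_add_one_eq_sum_Icc, add_comm]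

section JordanChain

variable {𝕂 B B' : Type*} [Ring 𝕂] [AddCommGroup B] [Module 𝕂 B]
  [AddCommGroup B'] [Module 𝕂 B']

def IsJordanChain (L : ℕ → B →ₗ[𝕂] B') (b : ℕ → B) (m : ℕ) : Prop :=
  ∀ l, l + 1 ≤ m → ∑ i ∈ range (l + 1), L i (b (l - i)) = 0

/-- The `n`-th Jordan equation reads `L 0 (b n) + jordanTail L b n = 0`. -/
def jordanTail (L : ℕ → B →ₗ[𝕂] B') (b : ℕ → B) (n : ℕ) : B' :=
  ∑ i ∈ Icc 1 n, L i (b (n - i))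

/-- `jordanSum L M a m x` is the `(m - a)`-th Jordan equation of the chain `j ↦ M (m - j) m x`. -/
def jordanSum (L : ℕ → B →ₗ[𝕂] B') (M : ℕ → ℕ → B →ₗ[𝕂] B) (a m : ℕ) : B →ₗ[𝕂] B' :=
  ∑ i ∈ range (m + 1 - a), (L i).comp (M (a + i) m)

variable {L : ℕ → B →ₗ[𝕂] B'} {b c : ℕ → B} {m n : ℕ}

theorem IsJordanChain.mono (hb : IsJordanChain L b m) (h : n ≤ m) : IsJordanChain L b n :=
  fun l hl => hb l (hl.trans h)

theorem IsJordanChain.sub (hb : IsJordanChain L b m) (hc : IsJordanChain L c m) :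
    IsJordanChain L (b - c) m := fun l hl => by
  simp only [Pi.sub_apply, map_sub, sum_sub_distrib, hb l hl, hc l hl, sub_zero]

theorem IsJordanChain.shift (hb : IsJordanChain L b (n + 1)) (hb0 : b 0 = 0) :
    IsJordanChain L (fun j => b (j + 1)) n := fun l hl => by
  have h := hb (l + 1) (by omega)
  rw [sum_range_succ, Nat.sub_self, hb0, map_zero, add_zero] at h
  refine (sum_congr rfl fun i hi => ?_).trans h
  rw [Nat.sub_add_comm (Nat.lt_succ_iff.1 (mem_range.1 hi))]

theorem IsJordanChain.apply_zero_add_jordanTail (hb : IsJordanChain L b (n + 1)) :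
    L 0 (b n) + jordanTail L b n = 0 := by
  have h := hb n le_rfl
  rwa [sum_range_succ', Nat.sub_zero, add_comm,
    sum_range_add_one_eq_sum_Icc n (fun i => L i (b (n - i)))] at h

theorem jordanTail_sub : jordanTail L (b - c) n = jordanTail L b n - jordanTail L c n := by
  simp only [jordanTail, Pi.sub_apply, map_sub, sum_sub_distrib]

theorem jordanTail_succ_of_apply_zero (hb0 : b 0 = 0) :
    jordanTail L b (n + 1) = jordanTail L (fun j => b (j + 1)) n := by
  rw [jordanTail, sum_Icc_succ_top (by omega), Nat.sub_self, hb0, map_zero, add_zero]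
  exact sum_congr rfl fun i hi => by rw [Nat.sub_add_comm (mem_Icc.1 hi).2]

theorem IsJordanChain.exists_of_stabilizes {rank : B → ℕ∞}
    (hrank : ∀ b0 : B, rank b0 = sSup {x : ℕ∞ | ∃ m : ℕ, 1 ≤ m ∧
      (∃ b : ℕ → B, b 0 = b0 ∧ IsJordanChain L b m) ∧ x = (m : ℕ∞)})
    {k : ℕ} (hstab : ∀ b0 : B, rank b0 ≤ (k : ℕ∞) ∨ rank b0 = ⊤)
    (hb : IsJordanChain L b (k + 1)) (m : ℕ) : ∃ c : ℕ → B, c 0 = b 0 ∧ IsJordanChain L c m := by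
  have hk : ((k + 1 : ℕ) : ℕ∞) ≤ rank (b 0) := by
    rw [hrank]
    exact le_sSup ⟨k + 1, by omega, ⟨b, rfl, hb⟩, rfl⟩
  have htop : rank (b 0) = ⊤ := (hstab (b 0)).resolve_left fun h => by
    have := hk.trans h
    norm_cast at this
    omega
  have hm : (m : ℕ∞) < rank (b 0) := htop ▸ ENat.natCast_lt_top m
  rw [hrank, lt_sSup_iff] at hm
  obtain ⟨_, ⟨m', -, ⟨c, hc0, hc⟩, rfl⟩, hmm'⟩ := hm
  exact ⟨c, hc0, hc.mono (by exact_mod_cast hmm'.le)⟩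

end JordanChain

section Recursion

variable {𝕂 B B' : Type*} [Ring 𝕂] [AddCommGroup B] [Module 𝕂 B]
  [AddCommGroup B'] [Module 𝕂 B']
  {L : ℕ → B →ₗ[𝕂] B'} {Sb S : ℕ → B →ₗ[𝕂] B'} {N Nc : ℕ → Submodule 𝕂 B}
  {R Rc : ℕ → Submodule 𝕂 B'} {P : ℕ → B' →ₗ[𝕂] B'} {T : ℕ → B' →ₗ[𝕂] B}
  {E M : ℕ → ℕ → B →ₗ[𝕂] B}
  (hN0 : N 0 = ⊤)
  (hSb1 : Sb 1 = L 0)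
  (hSbrec : ∀ k, 1 ≤ k → Sb (k + 1) = ∑ i ∈ Icc 1 k, (L i).comp (M i k))
  (hSdef : ∀ k, S (k + 1) = Sb (k + 1) - ∑ i ∈ Icc 1 k, (P i).comp (Sb (k + 1)))
  (hNdef : ∀ k, N (k + 1) = LinearMap.ker (S (k + 1)) ⊓ N k)
  (hRdef : ∀ k, R (k + 1) = Submodule.map (S (k + 1)) (N k))
  (hNcompl : ∀ k, Disjoint (Nc (k + 1)) (N (k + 1)) ∧ Nc (k + 1) ⊔ N (k + 1) = N k)
  (hRcompl : ∀ k, Disjoint (R (k + 1)) (Rc (k + 1)) ∧ R (k + 1) ⊔ Rc (k + 1) = Rc k)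
  (hPrange : ∀ i, 1 ≤ i → LinearMap.range (P i) ≤ R i)
  (hPid : ∀ i, 1 ≤ i → ∀ y ∈ R i, P i y = y)
  (hPzeroRc : ∀ i, 1 ≤ i → ∀ y ∈ Rc i, P i y = 0)
  (hPzeroR : ∀ i j, 1 ≤ j → j < i → ∀ y ∈ R j, P i y = 0)
  (hTrange : ∀ i, 1 ≤ i → ∀ y, T i y ∈ Nc i)
  (hST : ∀ i, 1 ≤ i → ∀ y, S i (T i y) = P i y)
  (hEdiag : ∀ k, E (k + 1) (k + 1) = LinearMap.id)
  (hErec : ∀ k i, 1 ≤ i → i ≤ k →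
    E i (k + 1) = -((T i).comp (∑ v ∈ Icc (i + 1) (k + 1), (Sb v).comp (E v (k + 1)))))
  (hM11 : M 1 1 = LinearMap.id)
  (hM1 : ∀ k, 1 ≤ k → M 1 (k + 1) = E 1 (k + 1))
  (hMrec : ∀ k a, 2 ≤ a → a ≤ k + 1 →
    M a (k + 1) = ∑ b ∈ Icc (a - 1) k, (M (a - 1) b).comp (E (b + 1) (k + 1)))

include hNdef in
theorem N_antitone : Antitone N :=
  antitone_nat_of_succ_le fun k => by rw [hNdef k]; exact inf_le_right

include hNdef in
theorem S_apply_eq_zero_of_mem_N {k : ℕ} {x : B} (hx : x ∈ N (k + 1)) : S (k + 1) x = 0 := by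
  rw [hNdef k] at hx
  exact hx.1

include hNcompl in
theorem Nc_succ_le_N (k : ℕ) : Nc (k + 1) ≤ N k := by
  rw [← (hNcompl k).2]
  exact le_sup_left

include hRcompl in
theorem R_le_Rc {i j : ℕ} (hij : i < j) : R j ≤ Rc i := by
  obtain ⟨t, rfl⟩ : ∃ t, j = t + 1 := ⟨j - 1, by omega⟩
  have hRc : Antitone Rc := antitone_nat_of_succ_le fun k => by
    rw [← (hRcompl k).2]; exact le_sup_right
  calc R (t + 1) ≤ Rc t := by rw [← (hRcompl t).2]; exact le_sup_left
    _ ≤ Rc i := hRc (Nat.lt_succ_iff.1 hij)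

include hRcompl hPid hPzeroRc hPzeroR in
theorem P_apply_of_mem_R {i t : ℕ} (hi : 1 ≤ i) (ht : 1 ≤ t) {y : B'} (hy : y ∈ R t) :
    P i y = if i = t then y else 0 := by
  rcases lt_trichotomy i t with h | rfl | h
  · rw [if_neg h.ne]
    exact hPzeroRc i hi y (R_le_Rc hRcompl h hy)
  · rw [if_pos rfl, hPid i hi y hy]
  · rw [if_neg h.ne']
    exact hPzeroR i t ht h y hy

include hRcompl hPid hPzeroRc hPzeroR in
theorem sum_P_apply_of_mem_sup {n : ℕ} {y : B'} (hy : y ∈ (Icc 1 n).sup R) :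
    ∑ i ∈ Icc 1 n, P i y = y := by
  have hker : (Icc 1 n).sup R ≤ LinearMap.ker (∑ i ∈ Icc 1 n, P i - LinearMap.id) :=
    Finset.sup_le fun t ht y hy => by
      have ht := mem_Icc.1 ht
      simp [LinearMap.sum_apply,
        sum_congr rfl fun i hi => P_apply_of_mem_R hRcompl hPid hPzeroRc hPzeroR
          (mem_Icc.1 hi).1 ht.1 hy, ht.1, ht.2]
  simpa [LinearMap.sum_apply, sub_eq_zero] using hker hy

include hSdef in
theorem S_succ_apply (k : ℕ) (x : B) :
    S (k + 1) x = Sb (k + 1) x - ∑ i ∈ Icc 1 k, P i (Sb (k + 1) x) := by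
  simp [hSdef, LinearMap.sum_apply]

include hSdef hSb1 in
theorem S_one : S 1 = L 0 := by
  simpa [hSb1] using hSdef 0

include hN0 hSdef hSb1 hRdef in
theorem L_zero_apply_mem_R_one (x : B) : L 0 x ∈ R 1 := by
  rw [hRdef 0, hN0, ← S_one hSb1 hSdef]
  exact Submodule.mem_map_of_mem trivial

include hSdef hRcompl hPid hPzeroRc hPzeroR in
theorem S_succ_apply_eq_zero_of_mem_sup {n : ℕ} {x : B} (hx : Sb (n + 1) x ∈ (Icc 1 n).sup R) :
    S (n + 1) x = 0 := by
  rw [S_succ_apply hSdef, sum_P_apply_of_mem_sup hRcompl hPid hPzeroRc hPzeroR hx, sub_self]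

include hSdef hRdef hPrange in
theorem Sb_succ_apply_mem_sup {n : ℕ} {x : B} (hx : x ∈ N n) :
    Sb (n + 1) x ∈ (Icc 1 (n + 1)).sup R := by
  have hS : S (n + 1) x ∈ R (n + 1) := hRdef n ▸ Submodule.mem_map_of_mem hx
  rw [show Sb (n + 1) x = S (n + 1) x + ∑ i ∈ Icc 1 n, P i (Sb (n + 1) x) by
    rw [S_succ_apply hSdef]; abel]
  refine add_mem (Finset.le_sup (f := R) (by simp) hS) (sum_mem fun i hi => ?_)
  exact Finset.le_sup (f := R) (Icc_subset_Icc_right n.le_succ hi)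
    (hPrange i (mem_Icc.1 hi).1 ⟨_, rfl⟩)

include hSdef hST hEdiag hErec in
theorem sum_Sb_comp_E (m : ℕ) :
    ∑ v ∈ Icc 1 (m + 1), (Sb v).comp (E v (m + 1)) = S (m + 1) := by
  ext x
  set G : ℕ → B' := fun j => ∑ v ∈ Icc j (m + 1), Sb v (E v (m + 1) x)
  suffices h : ∀ j ≤ m, G (j + 1) - ∑ i ∈ Icc 1 j, P i (G (j + 1)) = S (m + 1) x by
    simpa [G, LinearMap.sum_apply] using h 0 (Nat.zero_le m)
  intro j hj
  induction hj using Nat.decreasingInduction with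
  | self => simp [G, hEdiag, S_succ_apply hSdef]
  | of_succ j hj ih =>
    have hE : E (j + 1) (m + 1) x = -T (j + 1) (G (j + 2)) := by
      rw [hErec m (j + 1) (by omega) (by omega)]
      simp [G]
    have hGj : G (j + 1) = G (j + 2) - Sb (j + 1) (T (j + 1) (G (j + 2))) := by
      simp only [G]
      rw [← insert_Icc_add_one_left_eq_Icc (show j + 1 ≤ m + 1 by omega), sum_insert (by simp), hE]
      simp only [G, map_neg]
      abel
    have hP := hST (j + 1) (by omega) (G (j + 2))
    rw [S_succ_apply hSdef] at hP
    rw [← ih, sum_Icc_succ_top (by omega), hGj, ← hP]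
    simp only [map_sub, sum_sub_distrib]
    abel

include hSb1 hSbrec hSdef hST hEdiag hErec hM11 hM1 hMrec in
theorem jordanSum_one (m : ℕ) : jordanSum L M 1 (m + 1) = S (m + 1) := by
  cases m with
  | zero => simp [jordanSum, hM11, S_one hSb1 hSdef]
  | succ m =>
    rw [← sum_Sb_comp_E hSdef hST hEdiag hErec]
    ext x
    have hM : ∀ i ∈ Icc 1 (m + 1), L i (M (1 + i) (m + 2) x) =
        ∑ b ∈ Icc i (m + 1), L i (M i b (E (b + 1) (m + 2) x)) := fun i hi => by
      rw [add_comm, hMrec (m + 1) (i + 1) (by simp at hi; omega) (by simp at hi; omega)]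
      simp [LinearMap.sum_apply]
    calc jordanSum L M 1 (m + 2) x
        = Sb 1 (E 1 (m + 2) x) + ∑ i ∈ Icc 1 (m + 1), L i (M (1 + i) (m + 2) x) := by
          simp only [jordanSum, LinearMap.sum_apply, LinearMap.comp_apply, Nat.add_sub_cancel]
          rw [sum_range_succ', add_comm,
            sum_range_add_one_eq_sum_Icc (m + 1) fun i => L i (M (1 + i) (m + 2) x),
            add_zero, hM1 (m + 1) (by omega), hSb1]
      _ = Sb 1 (E 1 (m + 2) x) + ∑ b ∈ Icc 1 (m + 1), Sb (b + 1) (E (b + 1) (m + 2) x) := by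
          rw [sum_congr rfl hM, sum_comm' (t' := Icc 1 (m + 1)) (s' := fun b => Icc 1 b)
            (by intro i b; simp only [mem_Icc]; omega)]
          congr 1
          refine sum_congr rfl fun b hb => ?_
          simp [hSbrec b (mem_Icc.1 hb).1, LinearMap.sum_apply]
      _ = (∑ v ∈ Icc 1 (m + 2), (Sb v).comp (E v (m + 2))) x := by
          rw [sum_Icc_one_succ (m + 1) fun v => (Sb v).comp (E v (m + 2))]
          simp [LinearMap.sum_apply]

include hMrec in
theorem jordanSum_succ {a m : ℕ} (ha : 1 ≤ a) (ham : a ≤ m) :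
    jordanSum L M (a + 1) (m + 1) =
      ∑ b ∈ Icc a m, (jordanSum L M a b).comp (E (b + 1) (m + 1)) := by
  ext x
  simp only [jordanSum, LinearMap.sum_apply, LinearMap.comp_apply]
  rw [sum_comm' (t' := range (m + 1 - a)) (s' := fun i => Icc (a + i) m)
    (by intro b i; simp only [mem_Icc, mem_range]; omega)]
  refine sum_congr (by congr 1; omega) fun i hi => ?_
  rw [hMrec m (a + 1 + i) (by omega) (by simp at hi; omega),
    show a + 1 + i - 1 = a + i by omega]
  simp [LinearMap.sum_apply]

include hTrange hErec in
theorem E_apply_mem_Nc {i m : ℕ} (hi : 1 ≤ i) (him : i ≤ m) (x : B) : E i (m + 1) x ∈ Nc i := by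
  rw [hErec m i hi him]
  exact neg_mem (hTrange i hi _)

include hSb1 hSbrec hSdef hNdef hNcompl hTrange hST hEdiag hErec hM11 hM1 hMrec in
theorem jordanSum_apply_eq_zero {a m : ℕ} (ha : 1 ≤ a) (ham : a ≤ m) {x : B}
    (hx : x ∈ N (m + 1 - a)) : jordanSum L M a m x = 0 := by
  induction a, ha using Nat.le_induction generalizing m x with
  | base =>
    obtain ⟨m, rfl⟩ : ∃ k, m = k + 1 := ⟨m - 1, by omega⟩
    rw [jordanSum_one hSb1 hSbrec hSdef hST hEdiag hErec hM11 hM1 hMrec]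
    exact S_apply_eq_zero_of_mem_N hNdef (by simpa using hx)
  | succ a ha ih =>
    obtain ⟨m, rfl⟩ : ∃ k, m = k + 1 := ⟨m - 1, by omega⟩
    rw [jordanSum_succ hMrec ha (by omega), LinearMap.sum_apply]
    refine sum_eq_zero fun b hb => ih (by simp at hb; omega) ?_
    obtain ⟨hab, hbm⟩ := mem_Icc.1 hb
    rcases hbm.eq_or_lt with rfl | hbm
    · simpa [hEdiag] using hx
    · exact N_antitone hNdef (by omega)
        (Nc_succ_le_N hNcompl b (E_apply_mem_Nc hTrange hErec (by omega) hbm x))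

include hEdiag hM11 hMrec in
theorem M_self {m : ℕ} (hm : 1 ≤ m) : M m m = LinearMap.id := by
  induction m, hm using Nat.le_induction with
  | base => exact hM11
  | succ m hm ih =>
    rw [hMrec m (m + 1) (by omega) le_rfl, Nat.add_sub_cancel, Icc_self, sum_singleton, ih,
      hEdiag, LinearMap.comp_id]

include hSb1 hSbrec hSdef hNdef hNcompl hTrange hST hEdiag hErec hM11 hM1 hMrec in
theorem isJordanChain_M_apply {m : ℕ} {x : B} (hx : x ∈ N m) :
    IsJordanChain L (fun j => M (m - j) m x) m := fun l hl => by
  have h := jordanSum_apply_eq_zero hSb1 hSbrec hSdef hNdef hNcompl hTrange hST hEdiag hErec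
    hM11 hM1 hMrec (a := m - l) (by omega) (by omega)
    (N_antitone hNdef (show m + 1 - (m - l) ≤ m by omega) hx)
  rw [jordanSum, show m + 1 - (m - l) = l + 1 by omega, LinearMap.sum_apply] at h
  refine (sum_congr rfl fun i hi => ?_).trans h
  simp only [LinearMap.comp_apply, show m - (l - i) = m - l + i by simp at hi; omega]

include hSbrec in
theorem jordanTail_M_apply {n : ℕ} (hn : 1 ≤ n) (x : B) :
    jordanTail L (fun j => M (n - j) n x) n = Sb (n + 1) x := by
  rw [hSbrec n hn, jordanTail, LinearMap.sum_apply]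
  exact sum_congr rfl fun i hi => by rw [Nat.sub_sub_self (mem_Icc.1 hi).2]; rfl

include hSb1 hSbrec hSdef hNdef hNcompl hTrange hST hEdiag hErec hM11 hM1 hMrec in
theorem jordanTail_sub_Sb_mem {n : ℕ} {b : ℕ → B}
    (ih : ∀ c, IsJordanChain L c n → jordanTail L c n ∈ (Icc 1 (n + 1)).sup R)
    (hb : IsJordanChain L b (n + 1)) (hb0 : b 0 ∈ N (n + 1)) :
    jordanTail L b (n + 1) - Sb (n + 2) (b 0) ∈ (Icc 1 (n + 1)).sup R := by
  set ψ : ℕ → B := fun j => M (n + 1 - j) (n + 1) (b 0)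
  have hψ : IsJordanChain L ψ (n + 1) := isJordanChain_M_apply hSb1 hSbrec hSdef hNdef hNcompl
    hTrange hST hEdiag hErec hM11 hM1 hMrec hb0
  have hd0 : (b - ψ) 0 = 0 := by simp [ψ, M_self hEdiag hM11 hMrec (Nat.le_add_left 1 n)]
  rw [← jordanTail_M_apply hSbrec (Nat.le_add_left 1 n), ← jordanTail_sub,
    jordanTail_succ_of_apply_zero hd0]
  exact ih _ ((hb.sub hψ).shift hd0)

include hN0 hSb1 hSbrec hSdef hNdef hRdef hNcompl hRcompl hPrange hPid hPzeroRc hPzeroR hTrange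
  hST hEdiag hErec hM11 hM1 hMrec in
theorem IsJordanChain.apply_zero_mem_N_and_jordanTail_mem {n : ℕ} {b : ℕ → B}
    (hb : IsJordanChain L b n) : b 0 ∈ N n ∧ jordanTail L b n ∈ (Icc 1 (n + 1)).sup R := by
  induction n using Nat.strong_induction_on generalizing b with
  | _ n ih =>
  have hb0 : b 0 ∈ N n := by
    rcases n with _ | _ | n
    · simp [hN0]
    · have h := hb 0 le_rfl
      simp only [zero_add, range_one, sum_singleton] at h
      rw [hNdef 0, hN0, S_one hSb1 hSdef]
      exact ⟨h, trivial⟩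
    · have hbn := (ih (n + 1) (by omega) (hb.mono (by omega))).1
      have hdiff := jordanTail_sub_Sb_mem hSb1 hSbrec hSdef hNdef hNcompl hTrange hST hEdiag
        hErec hM11 hM1 hMrec (fun c hc => (ih n (by omega) hc).2) (hb.mono (by omega)) hbn
      have hL0 : L 0 (b (n + 1)) ∈ (Icc 1 (n + 1)).sup R :=
        Finset.le_sup (f := R) (by simp) (L_zero_apply_mem_R_one hN0 hSb1 hSdef hRdef _)
      have hSb : Sb (n + 2) (b 0) ∈ (Icc 1 (n + 1)).sup R := by
        have := sub_mem (neg_mem hL0) hdiff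
        rwa [← eq_neg_of_add_eq_zero_right hb.apply_zero_add_jordanTail, sub_sub_cancel] at this
      rw [hNdef (n + 1)]
      exact ⟨S_succ_apply_eq_zero_of_mem_sup hSdef hRcompl hPid hPzeroRc hPzeroR hSb, hbn⟩
  refine ⟨hb0, ?_⟩
  rcases n with _ | n
  · simp [jordanTail]
  · have hdiff := jordanTail_sub_Sb_mem hSb1 hSbrec hSdef hNdef hNcompl hTrange hST hEdiag
      hErec hM11 hM1 hMrec (fun c hc => (ih n (by omega) hc).2) hb hb0
    have hSb := Sb_succ_apply_mem_sup hSdef hRdef hPrange hb0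
    have hle : (Icc 1 (n + 1)).sup R ≤ (Icc 1 (n + 2)).sup R :=
      Finset.sup_mono (Icc_subset_Icc_right (Nat.le_succ _))
    simpa using add_mem (hle hdiff) hSb

include hN0 hSb1 hSbrec hSdef hNdef hRdef hNcompl hRcompl hPrange hPid hPzeroRc hPzeroR hTrange
  hST hEdiag hErec hM11 hM1 hMrec in
theorem T_eq_zero_of_stabilizes {rank : B → ℕ∞}
    (hrank : ∀ b0 : B, rank b0 = sSup {x : ℕ∞ | ∃ m : ℕ, 1 ≤ m ∧
      (∃ b : ℕ → B, b 0 = b0 ∧ IsJordanChain L b m) ∧ x = (m : ℕ∞)})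
    {k : ℕ} (hstab : ∀ b0 : B, rank b0 ≤ (k : ℕ∞) ∨ rank b0 = ⊤) {v : ℕ} (hv : k + 2 ≤ v) :
    T v = 0 := by
  obtain ⟨j, rfl⟩ : ∃ j, v = j + 1 := ⟨v - 1, by omega⟩
  have hN : N j ≤ N (j + 1) := fun x hx => by
    have hx' : M j j x = x := by rw [M_self hEdiag hM11 hMrec (by omega)]; rfl
    obtain ⟨c, hc0, hc⟩ := ((isJordanChain_M_apply hSb1 hSbrec hSdef hNdef hNcompl hTrange hST
      hEdiag hErec hM11 hM1 hMrec hx).mono (by omega)).exists_of_stabilizes hrank hstab (j + 1)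
    simpa [hc0, hx'] using (hc.apply_zero_mem_N_and_jordanTail_mem hN0 hSb1 hSbrec hSdef hNdef
      hRdef hNcompl hRcompl hPrange hPid hPzeroRc hPzeroR hTrange hST hEdiag hErec hM11 hM1
      hMrec).1
  have hNc : Nc (j + 1) = ⊥ := (hNcompl j).1.eq_bot_of_le ((Nc_succ_le_N hNcompl j).trans hN)
  ext y
  simpa [hNc] using hTrange (j + 1) (by omega) y

end Recursion

section TriangularSystem

variable {𝕂 B B' : Type*} [Ring 𝕂] [AddCommGroup B] [Module 𝕂 B]
  [AddCommGroup B'] [Module 𝕂 B'] {Sb : ℕ → B →ₗ[𝕂] B'} {T : ℕ → B' →ₗ[𝕂] B}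

theorem triangular_solution_unique {y : B'} {K : ℕ} {u w : ℕ → B}
    (hu : ∀ i, 1 ≤ i → i ≤ K → u i = -T i (y + ∑ v ∈ Icc (i + 1) K, Sb v (u v)))
    (hw : ∀ i, 1 ≤ i → i ≤ K → w i = -T i (y + ∑ v ∈ Icc (i + 1) K, Sb v (w v)))
    {i : ℕ} (hi : 1 ≤ i) (hiK : i ≤ K) : u i = w i := by
  induction hd : K - i using Nat.strong_induction_on generalizing i with
  | _ d ih =>
  rw [hu i hi hiK, hw i hi hiK]
  congr 3
  refine sum_congr rfl fun v hv => ?_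
  obtain ⟨hiv, hvK⟩ := mem_Icc.1 hv
  rw [ih (K - v) (by omega) (by omega) hvK rfl]

theorem e_succ_apply {e : ℕ → ℕ → B' →ₗ[𝕂] B}
    (heBase : ∀ m, 2 ≤ m → e (m - 1) m = -(T (m - 1)))
    (heStep : ∀ m i, 1 ≤ i → i + 2 ≤ m →
      e i m = (e i (m - 1)).comp ((LinearMap.id : B' →ₗ[𝕂] B') - (Sb (m - 1)).comp (T (m - 1))))
    {K : ℕ} (hK : 1 ≤ K) {i : ℕ} (hi : 1 ≤ i) (hiK : i ≤ K) (y : B') :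
    e i (K + 1) y = -T i (y + ∑ v ∈ Icc (i + 1) K, Sb v (e v (K + 1) y)) := by
  have hTop : ∀ K, 1 ≤ K → e K (K + 1) = -T K := fun K hK => by
    simpa using heBase (K + 1) (by omega)
  induction K, hK using Nat.le_induction generalizing i y with
  | base =>
    obtain rfl : i = 1 := by omega
    simp [hTop 1 le_rfl]
  | succ K hK ih =>
    rcases hiK.eq_or_lt with rfl | hiK
    · simp [hTop (K + 1) (by omega)]
    have hStep : ∀ u, 1 ≤ u → u ≤ K →
        e u (K + 2) y = e u (K + 1) (y - Sb (K + 1) (T (K + 1) y)) := fun u hu huK => by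
      simp [heStep (K + 2) u hu (by omega)]
    have hsum : ∑ v ∈ Icc (i + 1) K, Sb v (e v (K + 1 + 1) y) =
        ∑ v ∈ Icc (i + 1) K, Sb v (e v (K + 1) (y - Sb (K + 1) (T (K + 1) y))) :=
      sum_congr rfl fun v hv => by rw [hStep v (by simp at hv; omega) (mem_Icc.1 hv).2]
    rw [hStep i hi (by omega), ih hi (by omega), sum_Icc_succ_top (by omega),
      hTop (K + 1) (by omega), hsum]
    simp only [LinearMap.neg_apply, map_neg]
    abel_nf

theorem E_eq_e_comp_Sb {E : ℕ → ℕ → B →ₗ[𝕂] B} {e : ℕ → ℕ → B' →ₗ[𝕂] B}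
    (hEdiag : ∀ k, E (k + 1) (k + 1) = LinearMap.id)
    (hErec : ∀ k i, 1 ≤ i → i ≤ k →
      E i (k + 1) = -((T i).comp (∑ v ∈ Icc (i + 1) (k + 1), (Sb v).comp (E v (k + 1)))))
    (heBase : ∀ m, 2 ≤ m → e (m - 1) m = -(T (m - 1)))
    (heStep : ∀ m i, 1 ≤ i → i + 2 ≤ m →
      e i m = (e i (m - 1)).comp ((LinearMap.id : B' →ₗ[𝕂] B') - (Sb (m - 1)).comp (T (m - 1))))
    {K : ℕ} (hT : ∀ v, K + 1 ≤ v → T v = 0) {m : ℕ} (hm : K + 1 ≤ m)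
    {i : ℕ} (hi : 1 ≤ i) (hiK : i ≤ K) : E i m = (e i (K + 1)).comp (Sb m) := by
  obtain ⟨m, rfl⟩ : ∃ m', m = m' + 1 := ⟨m - 1, by omega⟩
  ext x
  have hE : ∀ j, 1 ≤ j → j ≤ m →
      E j (m + 1) x = -T j (∑ v ∈ Icc (j + 1) (m + 1), Sb v (E v (m + 1) x)) := fun j hj hjm => by
    simp [hErec m j hj hjm]
  -- only `v = m + 1` survives among `v > K`, since `E v (m + 1) = 0` for `K < v ≤ m`
  have hsum : ∀ j ≤ K, ∑ v ∈ Icc (j + 1) (m + 1), Sb v (E v (m + 1) x) =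
      Sb (m + 1) x + ∑ v ∈ Icc (j + 1) K, Sb v (E v (m + 1) x) := fun j hj => by
    rw [Icc_add_one_left_eq_Ioc, Icc_add_one_left_eq_Ioc, ← sum_Ioc_consecutive _ hj (by omega),
      add_comm, sum_eq_single_of_mem (m + 1) (by simp; omega)]
    · simp [hEdiag]
    · intro v hv hvm
      simp only [mem_Ioc] at hv
      rw [hE v (by omega) (by omega), hT v (by omega)]
      simp
  refine triangular_solution_unique (u := fun j => E j (m + 1) x)
    (fun j hj hjK => ?_) (fun j hj hjK => e_succ_apply heBase heStep (by omega) hj hjK _) hi hiK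
  rw [hE j hj (by omega), hsum j hjK]

end TriangularSystem

theorem stmt_12_general
    {𝕂 : Type*} [RCLike 𝕂]
    {B B' : Type*} [AddCommGroup B] [Module 𝕂 B]
    [AddCommGroup B'] [Module 𝕂 B']
    (L : ℕ → B →ₗ[𝕂] B')
    (Sb S : ℕ → B →ₗ[𝕂] B')
    (N Nc : ℕ → Submodule 𝕂 B)
    (R Rc : ℕ → Submodule 𝕂 B')
    (P : ℕ → B' →ₗ[𝕂] B')
    (T : ℕ → B' →ₗ[𝕂] B)
    (E M : ℕ → ℕ → B →ₗ[𝕂] B)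
    (hN0 : N 0 = ⊤)
    (hSb1 : Sb 1 = L 0)
    (hSbrec : ∀ k, 1 ≤ k → Sb (k + 1) = ∑ i ∈ Finset.Icc 1 k, (L i).comp (M i k))
    (hSdef : ∀ k, S (k + 1) = Sb (k + 1) - ∑ i ∈ Finset.Icc 1 k, (P i).comp (Sb (k + 1)))
    (hNdef : ∀ k, N (k + 1) = LinearMap.ker (S (k + 1)) ⊓ N k)
    (hRdef : ∀ k, R (k + 1) = Submodule.map (S (k + 1)) (N k))
    (hNcompl : ∀ k, Disjoint (Nc (k + 1)) (N (k + 1)) ∧ Nc (k + 1) ⊔ N (k + 1) = N k)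
    (hRcompl : ∀ k, Disjoint (R (k + 1)) (Rc (k + 1)) ∧ R (k + 1) ⊔ Rc (k + 1) = Rc k)
    (hPrange : ∀ i, 1 ≤ i → LinearMap.range (P i) ≤ R i)
    (hPid : ∀ i, 1 ≤ i → ∀ y ∈ R i, P i y = y)
    (hPzeroRc : ∀ i, 1 ≤ i → ∀ y ∈ Rc i, P i y = 0)
    (hPzeroR : ∀ i j, 1 ≤ j → j < i → ∀ y ∈ R j, P i y = 0)
    (hTrange : ∀ i, 1 ≤ i → ∀ y, T i y ∈ Nc i)
    (hST : ∀ i, 1 ≤ i → ∀ y, S i (T i y) = P i y)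
    (hEdiag : ∀ k, E (k + 1) (k + 1) = LinearMap.id)
    (hErec : ∀ k i, 1 ≤ i → i ≤ k →
      E i (k + 1) = -((T i).comp (∑ v ∈ Finset.Icc (i + 1) (k + 1), (Sb v).comp (E v (k + 1)))))
    (hM11 : M 1 1 = LinearMap.id)
    (hM1 : ∀ k, 1 ≤ k → M 1 (k + 1) = E 1 (k + 1))
    (hMrec : ∀ k a, 2 ≤ a → a ≤ k + 1 →
      M a (k + 1) = ∑ b ∈ Finset.Icc (a - 1) k, (M (a - 1) b).comp (E (b + 1) (k + 1)))
    (e : ℕ → ℕ → B' →ₗ[𝕂] B)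
    (heBase : ∀ m, 2 ≤ m → e (m - 1) m = -(T (m - 1)))
    (heStep : ∀ m i, 1 ≤ i → i + 2 ≤ m →
      e i m = (e i (m - 1)).comp ((LinearMap.id : B' →ₗ[𝕂] B') - (Sb (m - 1)).comp (T (m - 1))))
    (rank : B → ℕ∞)
    (hrank : ∀ b0 : B, rank b0 = sSup {x : ℕ∞ | ∃ m : ℕ, 1 ≤ m ∧
      (∃ b : ℕ → B, b 0 = b0 ∧
        ∀ l, l + 1 ≤ m → ∑ i ∈ Finset.range (l + 1), L i (b (l - i)) = 0) ∧ x = (m : ℕ∞)})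
    (k : ℕ)
    (hstab : (∀ b0 : B, rank b0 ≤ (k : ℕ∞) ∨ rank b0 = ⊤) ∧ ∃ b0 : B, rank b0 = (k : ℕ∞))
    :
    ∀ l, 2 ≤ l → ∀ i, 1 ≤ i → i ≤ k + 1 →
      E i (k + 1 + l) = (e i (k + 2)).comp (Sb (k + 1 + l)) := by
  have hT : ∀ v, k + 1 + 1 ≤ v → T v = 0 := fun v hv =>
    T_eq_zero_of_stabilizes hN0 hSb1 hSbrec hSdef hNdef hRdef hNcompl hRcompl hPrange hPid
      hPzeroRc hPzeroR hTrange hST hEdiag hErec hM11 hM1 hMrec hrank hstab.1 hv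
  intro l hl i hi hik
  exact E_eq_e_comp_Sb hEdiag hErec heBase heStep hT (by omega) hi hik

theorem stmt_12
    {𝕂 : Type*} [RCLike 𝕂]
    {B B' : Type*} [AddCommGroup B] [Module 𝕂 B]
    [AddCommGroup B'] [Module 𝕂 B']
    (L : ℕ → B →ₗ[𝕂] B')
    (Sb S : ℕ → B →ₗ[𝕂] B')
    (N Nc : ℕ → Submodule 𝕂 B)
    (R Rc : ℕ → Submodule 𝕂 B')
    (P : ℕ → B' →ₗ[𝕂] B')
    (T : ℕ → B' →ₗ[𝕂] B)
    (E M : ℕ → ℕ → B →ₗ[𝕂] B)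
    (hL : ∃ i, L i ≠ 0)
    (hN0 : N 0 = ⊤) (hRc0 : Rc 0 = ⊤)
    (hSb1 : Sb 1 = L 0)
    (hSbrec : ∀ k, 1 ≤ k → Sb (k + 1) = ∑ i ∈ Finset.Icc 1 k, (L i).comp (M i k))
    (hSdef : ∀ k, S (k + 1) = Sb (k + 1) - ∑ i ∈ Finset.Icc 1 k, (P i).comp (Sb (k + 1)))
    (hNdef : ∀ k, N (k + 1) = LinearMap.ker (S (k + 1)) ⊓ N k)
    (hRdef : ∀ k, R (k + 1) = Submodule.map (S (k + 1)) (N k))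
    (hNcompl : ∀ k, Disjoint (Nc (k + 1)) (N (k + 1)) ∧ Nc (k + 1) ⊔ N (k + 1) = N k)
    (hRcompl : ∀ k, Disjoint (R (k + 1)) (Rc (k + 1)) ∧ R (k + 1) ⊔ Rc (k + 1) = Rc k)
    (hPrange : ∀ i, 1 ≤ i → LinearMap.range (P i) ≤ R i)
    (hPid : ∀ i, 1 ≤ i → ∀ y ∈ R i, P i y = y)
    (hPzeroRc : ∀ i, 1 ≤ i → ∀ y ∈ Rc i, P i y = 0)
    (hPzeroR : ∀ i j, 1 ≤ j → j < i → ∀ y ∈ R j, P i y = 0)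
    (hTrange : ∀ i, 1 ≤ i → ∀ y, T i y ∈ Nc i)
    (hTS : ∀ i, 1 ≤ i → ∀ x ∈ Nc i, T i (S i x) = x)
    (hST : ∀ i, 1 ≤ i → ∀ y, S i (T i y) = P i y)
    (hE11 : E 1 1 = LinearMap.id)
    (hEdiag : ∀ k, E (k + 1) (k + 1) = LinearMap.id)
    (hErec : ∀ k i, 1 ≤ i → i ≤ k →
      E i (k + 1) = -((T i).comp (∑ v ∈ Finset.Icc (i + 1) (k + 1), (Sb v).comp (E v (k + 1)))))
    (hM11 : M 1 1 = LinearMap.id)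
    (hM1 : ∀ k, 1 ≤ k → M 1 (k + 1) = E 1 (k + 1))
    (hMrec : ∀ k a, 2 ≤ a → a ≤ k + 1 →
      M a (k + 1) = ∑ b ∈ Finset.Icc (a - 1) k, (M (a - 1) b).comp (E (b + 1) (k + 1)))
    (e : ℕ → ℕ → B' →ₗ[𝕂] B)
    (heBase : ∀ m, 2 ≤ m → e (m - 1) m = -(T (m - 1)))
    (heStep : ∀ m i, 1 ≤ i → i + 2 ≤ m →
      e i m = (e i (m - 1)).comp ((LinearMap.id : B' →ₗ[𝕂] B') - (Sb (m - 1)).comp (T (m - 1))))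
    (rank : B → ℕ∞)
    (hrank : ∀ b0 : B, rank b0 = sSup {x : ℕ∞ | ∃ m : ℕ, 1 ≤ m ∧
      (∃ b : ℕ → B, b 0 = b0 ∧
        ∀ l, l + 1 ≤ m → ∑ i ∈ Finset.range (l + 1), L i (b (l - i)) = 0) ∧ x = (m : ℕ∞)})
    (k : ℕ)
    (hstab : (∀ b0 : B, rank b0 ≤ (k : ℕ∞) ∨ rank b0 = ⊤) ∧ ∃ b0 : B, rank b0 = (k : ℕ∞))
    :
    ∀ l, 2 ≤ l → ∀ i, 1 ≤ i → i ≤ k + 1 →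
      E i (k + 1 + l) = (e i (k + 2)).comp (Sb (k + 1 + l)) :=
  stmt_12_general L Sb S N Nc R Rc P T E M hN0 hSb1 hSbrec hSdef hNdef hRdef hNcompl hRcompl hPrange
    hPid hPzeroRc hPzeroR hTrange hST hEdiag hErec hM11 hM1 hMrec e heBase heStep rank hrank k hstab
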